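/- arXiv:2412.05417 — 2 statements merged into one kernel-verified Lean document; each statement's English description precedes it below -/
import Mathlib

section
/- The contiguity shift operators satisfy the commutation relation E_+(k + (-2,1)) ∘ E_-(k) = E_-(k + (2,-1)) ∘ E_+(k) + k_1 as operators on Laurent polynomials. -/
open Polynomial

/-- `f : ℂ → ℂ` is (the evaluation of) a Laurent polynomial. -/
def IsLaurent (f : ℂ → ℂ) : Prop :=
  ∃ (p : Polynomial ℂ) (n : ℕ), ∀ z : ℂ, z ≠ 0 → f z = p.eval z / z ^ n

/-- The contiguity shift operator `E₊(k) = ((1+z⁻¹)/(1-z⁻¹)) z∂z + k₂ - 1/2`. -/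
noncomputable def Eplus (k1 k2 : ℂ) (f : ℂ → ℂ) : ℂ → ℂ := fun z =>
  ((1 + z⁻¹) / (1 - z⁻¹)) * (z * deriv f z) + (k2 - 1/2) * f z

/-- The contiguity shift operator `E₋(k) = ((1-z⁻¹)/(1+z⁻¹)) z∂z + k₁ + k₂ - 1/2`. -/
noncomputable def Eminus (k1 k2 : ℂ) (f : ℂ → ℂ) : ℂ → ℂ := fun z =>
  ((1 - z⁻¹) / (1 + z⁻¹)) * (z * deriv f z) + (k1 + k2 - 1/2) * f z

/-!
Away from `z = 0` the operators are `E₊ = a · z∂z + c` and `E₋ = b · z∂z + d` with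
`a = (z+1)/(z-1)` and `b = a⁻¹`. Both compositions have second-order part `ab (z∂z)² = (z∂z)²`.
Their first-order parts agree because `a · z∂z b - b · z∂z a = 4z/(z²-1) = a - b` exactly
compensates the shifts `∓1` of the constants, and the constant terms differ by `k₁`.
-/

open Filter Topology

section FirstOrder

variable {𝕜 : Type*} [NontriviallyNormedField 𝕜]

theorem hasDerivAt_eval_div_pow (p : 𝕜[X]) (n : ℕ) {w : 𝕜} (hw : w ≠ 0) :
    HasDerivAt (fun z : 𝕜 => p.eval z / z ^ n)
      ((X * derivative p - C (n : 𝕜) * p).eval w / w ^ (n + 1)) w := by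
  have h : HasDerivAt (fun z : 𝕜 => p.eval z / z ^ n) _ w :=
    (p.hasDerivAt w).div (hasDerivAt_pow n w) (pow_ne_zero n hw)
  convert h using 1
  simp only [eval_sub, eval_mul, eval_X, eval_C]
  rcases n with _ | m
  · simp [hw]
  · rw [Nat.add_sub_cancel]
    field_simp
    ring

theorem hasDerivAt_add_one_div_sub_one {z : 𝕜} (hz : z - 1 ≠ 0) :
    HasDerivAt (fun w => (w + 1) / (w - 1)) (-2 / (z - 1) ^ 2) z := by
  have h : HasDerivAt (fun w => (w + 1) / (w - 1)) _ z :=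
    ((hasDerivAt_id z).add_const 1).div ((hasDerivAt_id z).sub_const 1) hz
  convert h using 1
  simp only [id]
  ring

theorem hasDerivAt_sub_one_div_add_one {z : 𝕜} (hz : z + 1 ≠ 0) :
    HasDerivAt (fun w => (w - 1) / (w + 1)) (2 / (z + 1) ^ 2) z := by
  have h : HasDerivAt (fun w => (w - 1) / (w + 1)) _ z :=
    ((hasDerivAt_id z).sub_const 1).div ((hasDerivAt_id z).add_const 1) hz
  convert h using 1
  simp only [id]
  ring

noncomputable def firstOrderOp (a : 𝕜 → 𝕜) (c : 𝕜) (f : 𝕜 → 𝕜) : 𝕜 → 𝕜 := fun w =>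
  a w * (w * deriv f w) + c * f w

theorem firstOrderOp_congr (a : 𝕜 → 𝕜) (c : 𝕜) {f g : 𝕜 → 𝕜} {z : 𝕜} (h : f =ᶠ[𝓝 z] g) :
    firstOrderOp a c f z = firstOrderOp a c g z := by
  simp only [firstOrderOp, h.deriv_eq, h.eq_of_nhds]

theorem firstOrderOp_firstOrderOp (a b : 𝕜 → 𝕜) (c d : 𝕜) {f : 𝕜 → 𝕜} {z : 𝕜}
    (hb : DifferentiableAt 𝕜 b z) (hf : DifferentiableAt 𝕜 f z)
    (hf' : DifferentiableAt 𝕜 (deriv f) z) :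
    firstOrderOp a c (firstOrderOp b d f) z =
      a z * b z * z ^ 2 * deriv (deriv f) z
        + (a z * (z * deriv b z + b z + d) + c * b z) * (z * deriv f z) + c * d * f z := by
  have h : HasDerivAt (firstOrderOp b d f)
      (deriv b z * (z * deriv f z) + b z * (1 * deriv f z + z * deriv (deriv f) z)
        + d * deriv f z) z :=
    (hb.hasDerivAt.mul ((hasDerivAt_id z).mul hf'.hasDerivAt)).add
      (hf.hasDerivAt.const_mul d)
  simp only [firstOrderOp, h.deriv]
  ring

end FirstOrder

theorem one_add_inv_div_one_sub_inv {K : Type*} [Field K] {w : K} (hw : w ≠ 0) :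
    (1 + w⁻¹) / (1 - w⁻¹) = (w + 1) / (w - 1) := by
  rw [← mul_div_mul_left _ _ hw, mul_add, mul_sub, mul_one, mul_inv_cancel₀ hw]

namespace IsLaurent

variable {f : ℂ → ℂ}

theorem hasDerivAt (hf : IsLaurent f) :
    ∃ f' : ℂ → ℂ, IsLaurent f' ∧ ∀ w : ℂ, w ≠ 0 → HasDerivAt f (f' w) w := by
  obtain ⟨p, n, hp⟩ := hf
  refine ⟨fun w => (X * derivative p - C (n : ℂ) * p).eval w / w ^ (n + 1),
    ⟨_, _, fun _ _ => rfl⟩, fun w hw => ?_⟩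
  refine (hasDerivAt_eval_div_pow p n hw).congr_of_eventuallyEq ?_
  filter_upwards [eventually_ne_nhds hw] with x hx
  exact hp x hx

theorem differentiableAt (hf : IsLaurent f) {w : ℂ} (hw : w ≠ 0) : DifferentiableAt ℂ f w := by
  obtain ⟨_, -, hf'⟩ := hf.hasDerivAt
  exact (hf' w hw).differentiableAt

theorem deriv (hf : IsLaurent f) : IsLaurent (deriv f) := by
  obtain ⟨f', ⟨p, n, hp⟩, hf'⟩ := hf.hasDerivAt
  exact ⟨p, n, fun w hw => (hf' w hw).deriv.trans (hp w hw)⟩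

end IsLaurent

theorem Eplus_eventuallyEq (k1 k2 : ℂ) (f : ℂ → ℂ) {z : ℂ} (hz : z ≠ 0) :
    Eplus k1 k2 f =ᶠ[𝓝 z] firstOrderOp (fun w => (w + 1) / (w - 1)) (k2 - 1 / 2) f := by
  filter_upwards [eventually_ne_nhds hz] with w hw
  simp only [Eplus, firstOrderOp, one_add_inv_div_one_sub_inv hw]

theorem Eminus_eventuallyEq (k1 k2 : ℂ) (f : ℂ → ℂ) {z : ℂ} (hz : z ≠ 0) :
    Eminus k1 k2 f =ᶠ[𝓝 z] firstOrderOp (fun w => (w - 1) / (w + 1)) (k1 + k2 - 1 / 2) f := by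
  filter_upwards [eventually_ne_nhds hz] with w hw
  simp only [Eminus, firstOrderOp, ← inv_div (1 + w⁻¹), one_add_inv_div_one_sub_inv hw, inv_div]

/-- `E₊(k + (-2,1)) ∘ E₋(k) = E₋(k + (2,-1)) ∘ E₊(k) + k₁` on Laurent polynomials. -/
theorem stmt3 (k1 k2 : ℂ) (f : ℂ → ℂ) (hf : IsLaurent f)
    (z : ℂ) (hz : z ≠ 0) (hz2 : z ^ 2 ≠ 1) :
    Eplus (k1 - 2) (k2 + 1) (Eminus k1 k2 f) z =
      Eminus (k1 + 2) (k2 - 1) (Eplus k1 k2 f) z + k1 * f z := by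
  have hzm : z - 1 ≠ 0 := fun h => hz2 (by rw [sub_eq_zero.1 h]; norm_num)
  have hzp : z + 1 ≠ 0 := fun h => hz2 (by rw [eq_neg_of_add_eq_zero_left h]; norm_num)
  have ha := hasDerivAt_add_one_div_sub_one hzm
  have hb := hasDerivAt_sub_one_div_add_one hzp
  have hf₁ := hf.differentiableAt hz
  have hf₂ := hf.deriv.differentiableAt hz
  rw [(Eplus_eventuallyEq _ _ _ hz).eq_of_nhds, (Eminus_eventuallyEq _ _ _ hz).eq_of_nhds,
    firstOrderOp_congr _ _ (Eminus_eventuallyEq k1 k2 f hz),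
    firstOrderOp_congr _ _ (Eplus_eventuallyEq k1 k2 f hz),
    firstOrderOp_firstOrderOp _ _ _ _ hb.differentiableAt hf₁ hf₂,
    firstOrderOp_firstOrderOp _ _ _ _ ha.differentiableAt hf₁ hf₂, ha.deriv, hb.deriv]
  field_simp
  ring
end

section
/- The lower-triangular matrix operator with diagonal entries E_+(k_+), E_+(k_-) and (2,1)-entry γ satisfies the transmutation relation Ê·D̂_k = D̂_{k+(2,-1)}·Ê if and only if γ = -1. -/
open Polynomial

/-- The 2×2 matrix operator `D̂_k = [[(1-k₁)/2, -E₊(k₋)], [-E₋(k₊), (1+k₁)/2]]`. -/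
noncomputable def Dhat (k1 k2 : ℂ) (fg : (ℂ → ℂ) × (ℂ → ℂ)) : (ℂ → ℂ) × (ℂ → ℂ) :=
  (fun z => (1 - k1) / 2 * fg.1 z - Eplus (k1 - 1) (k2 + 1) fg.2 z,
   fun z => -Eminus (k1 + 1) k2 fg.1 z + (1 + k1) / 2 * fg.2 z)

/-- The lower triangular matrix operator `Ê = [[E₊(k₊), 0], [γ, E₊(k₋)]]`. -/
noncomputable def Ehat (k1 k2 γ : ℂ) (fg : (ℂ → ℂ) × (ℂ → ℂ)) : (ℂ → ℂ) × (ℂ → ℂ) :=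
  (Eplus (k1 + 1) k2 fg.1,
   fun z => γ * fg.1 z + Eplus (k1 - 1) (k2 + 1) fg.2 z)

/-! Using that `E₊` is a first-order operator, hence linear, and the contiguity relation
`E₊(k + (-2,1)) E₋(k) = E₋(k + (2,-1)) E₊(k) + k₁`, the two sides of `Ê D̂_k = D̂_{k+(2,-1)} Ê` differ
by `(1 + γ) • (E₊(k₊) f, -(1 + k₁) f - E₊(k₋) g)`. So `γ = -1` suffices; conversely, for `f = z`,
`g = 0` the defect is `(1 + γ) z ((z + 1) / (z - 1) + k₂ - 1/2)`, which cannot vanish at both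
`z = 2` and `z = 3` unless `γ = -1`. -/

section Coefficients

variable {K : Type*} [Field K] {x : K}

lemma one_add_inv_div_one_sub_inv_s5 (hx : x ≠ 0) : (1 + x⁻¹) / (1 - x⁻¹) = (x + 1) / (x - 1) := by
  rw [← mul_div_mul_left _ _ hx, mul_add, mul_sub, mul_one, mul_inv_cancel₀ hx]

lemma one_sub_inv_div_one_add_inv (hx : x ≠ 0) : (1 - x⁻¹) / (1 + x⁻¹) = (x - 1) / (x + 1) := by
  rw [← mul_div_mul_left _ _ hx, mul_add, mul_sub, mul_one, mul_inv_cancel₀ hx]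

variable {𝕜 : Type*} [NontriviallyNormedField 𝕜] {z : 𝕜}

lemma hasDerivAt_one_add_inv_div_one_sub_inv (hz : z ≠ 0) (hz1 : z ≠ 1) :
    HasDerivAt (fun w : 𝕜 => (1 + w⁻¹) / (1 - w⁻¹)) (-2 / (z - 1) ^ 2) z := by
  have h := ((hasDerivAt_id z).add_const 1).div ((hasDerivAt_id z).sub_const 1) (sub_ne_zero.2 hz1)
  refine (h.congr_deriv (by simp only [id_eq]; ring)).congr_of_eventuallyEq ?_
  filter_upwards [eventually_ne_nhds hz] with w hw using one_add_inv_div_one_sub_inv_s5 hw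

lemma hasDerivAt_one_sub_inv_div_one_add_inv (hz : z ≠ 0) (hz1 : z ≠ -1) :
    HasDerivAt (fun w : 𝕜 => (1 - w⁻¹) / (1 + w⁻¹)) (2 / (z + 1) ^ 2) z := by
  have h := ((hasDerivAt_id z).sub_const 1).div ((hasDerivAt_id z).add_const 1)
    (by rwa [Ne, add_eq_zero_iff_eq_neg])
  refine (h.congr_deriv (by simp only [id_eq]; ring)).congr_of_eventuallyEq ?_
  filter_upwards [eventually_ne_nhds hz] with w hw using one_sub_inv_div_one_add_inv hw

end Coefficients

section Contiguity

variable {f g : ℂ → ℂ} {z f' : ℂ} (k1 k2 : ℂ)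

lemma Eplus_apply_of_hasDerivAt (hf : HasDerivAt f f' z) :
    Eplus k1 k2 f z = (1 + z⁻¹) / (1 - z⁻¹) * (z * f') + (k2 - 1/2) * f z := by
  rw [Eplus, hf.deriv]

lemma Eminus_apply_of_hasDerivAt (hf : HasDerivAt f f' z) :
    Eminus k1 k2 f z = (1 - z⁻¹) / (1 + z⁻¹) * (z * f') + (k1 + k2 - 1/2) * f z := by
  rw [Eminus, hf.deriv]

lemma hasDerivAt_Eplus (hf : AnalyticAt ℂ f z) (hz : z ≠ 0) (hz1 : z ≠ 1) :
    HasDerivAt (Eplus k1 k2 f)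
      (-2 / (z - 1) ^ 2 * (z * deriv f z) + (z + 1) / (z - 1) * (deriv f z + z * deriv (deriv f) z)
        + (k2 - 1/2) * deriv f z) z := by
  have h := ((hasDerivAt_one_add_inv_div_one_sub_inv hz hz1).mul
    ((hasDerivAt_id z).mul hf.deriv.differentiableAt.hasDerivAt)).add
    (hf.differentiableAt.hasDerivAt.const_mul (k2 - 1/2))
  refine h.congr_deriv ?_
  rw [one_add_inv_div_one_sub_inv_s5 hz]
  simp

lemma hasDerivAt_Eminus (hf : AnalyticAt ℂ f z) (hz : z ≠ 0) (hz1 : z ≠ -1) :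
    HasDerivAt (Eminus k1 k2 f)
      (2 / (z + 1) ^ 2 * (z * deriv f z) + (z - 1) / (z + 1) * (deriv f z + z * deriv (deriv f) z)
        + (k1 + k2 - 1/2) * deriv f z) z := by
  have h := ((hasDerivAt_one_sub_inv_div_one_add_inv hz hz1).mul
    ((hasDerivAt_id z).mul hf.deriv.differentiableAt.hasDerivAt)).add
    (hf.differentiableAt.hasDerivAt.const_mul (k1 + k2 - 1/2))
  refine h.congr_deriv ?_
  rw [one_sub_inv_div_one_add_inv hz]
  simp

/- The first-order terms cancel because `a = (z + 1) / (z - 1)`, the coefficient of `E₊`, satisfies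
`z a' = (1 - a²) / 2`, and the coefficient of `E₋` is `1 / a`. -/
theorem Eplus_Eminus_apply (hf : AnalyticAt ℂ f z) (hz : z ≠ 0) (hz1 : z ≠ 1) (hz1' : z ≠ -1) :
    Eplus (k1 - 2) (k2 + 1) (Eminus k1 k2 f) z
      = Eminus (k1 + 2) (k2 - 1) (Eplus k1 k2 f) z + k1 * f z := by
  rw [Eplus_apply_of_hasDerivAt _ _ (hasDerivAt_Eminus k1 k2 hf hz hz1'),
    Eminus_apply_of_hasDerivAt _ _ (hasDerivAt_Eplus k1 k2 hf hz hz1), Eplus, Eminus,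
    one_add_inv_div_one_sub_inv_s5 hz, one_sub_inv_div_one_add_inv hz]
  have : z - 1 ≠ 0 := sub_ne_zero.2 hz1
  have : z + 1 ≠ 0 := by rwa [Ne, add_eq_zero_iff_eq_neg]
  field_simp
  ring

end Contiguity

section Transmutation

variable {f g : ℂ → ℂ} {z : ℂ} (k1 k2 γ : ℂ)

lemma Ehat_Dhat_fst (hf : DifferentiableAt ℂ f z) (hg : AnalyticAt ℂ g z) (hz : z ≠ 0)
    (hz1 : z ≠ 1) :
    (Ehat k1 k2 γ (Dhat k1 k2 (f, g))).1 z
      = (Dhat (k1 + 2) (k2 - 1) (Ehat k1 k2 γ (f, g))).1 z + (1 + γ) * Eplus (k1 + 1) k2 f z := by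
  have hf' := hf.hasDerivAt
  have hEg := hasDerivAt_Eplus (k1 - 1) (k2 + 1) hg hz hz1
  simp only [Ehat, Dhat]
  rw [Eplus_apply_of_hasDerivAt _ _ ((hf'.const_mul _).fun_sub hEg),
    Eplus_apply_of_hasDerivAt _ _ ((hf'.const_mul γ).fun_add hEg), Eplus_apply_of_hasDerivAt _ _ hf']
  ring

lemma Ehat_Dhat_snd (hf : AnalyticAt ℂ f z) (hg : DifferentiableAt ℂ g z) (hz : z ≠ 0)
    (hz1 : z ≠ 1) (hz1' : z ≠ -1) :
    (Ehat k1 k2 γ (Dhat k1 k2 (f, g))).2 z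
      = (Dhat (k1 + 2) (k2 - 1) (Ehat k1 k2 γ (f, g))).2 z
        + (1 + γ) * (-((1 + k1) * f z) - Eplus (k1 - 1) (k2 + 1) g z) := by
  have hg' := hg.hasDerivAt
  have hEf := hasDerivAt_Eminus (k1 + 1) k2 hf hz hz1'
  have hrel := Eplus_Eminus_apply (k1 + 1) k2 hf hz hz1 hz1'
  rw [Eplus_apply_of_hasDerivAt _ _ hEf] at hrel
  simp only [Ehat, Dhat]
  rw [Eplus_apply_of_hasDerivAt _ _ (hEf.fun_neg.fun_add (hg'.const_mul _)),
    Eplus_apply_of_hasDerivAt _ _ hg', add_right_comm k1 2 1]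
  linear_combination (-1) * hrel

end Transmutation

lemma IsLaurent.analyticAt {f : ℂ → ℂ} (hf : IsLaurent f) {z : ℂ} (hz : z ≠ 0) :
    AnalyticAt ℂ f z := by
  obtain ⟨p, n, hp⟩ := hf
  have hq : AnalyticAt ℂ (fun w => p.eval w / w ^ n) z :=
    (AnalyticAt.aeval_polynomial analyticAt_id p).div (analyticAt_id.pow n) (pow_ne_zero n hz)
  exact hq.congr <| (eventually_ne_nhds hz).mono fun w hw => (hp w hw).symm

/-- `Ê ∘ D̂_k = D̂_{k+(2,-1)} ∘ Ê` on Laurent polynomials iff `γ = -1`. -/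
theorem stmt5 (k1 k2 γ : ℂ) :
    (∀ f g : ℂ → ℂ, IsLaurent f → IsLaurent g →
      ∀ z : ℂ, z ≠ 0 → z ^ 2 ≠ 1 →
        (Ehat k1 k2 γ (Dhat k1 k2 (f, g))).1 z
            = (Dhat (k1 + 2) (k2 - 1) (Ehat k1 k2 γ (f, g))).1 z ∧
        (Ehat k1 k2 γ (Dhat k1 k2 (f, g))).2 z
            = (Dhat (k1 + 2) (k2 - 1) (Ehat k1 k2 γ (f, g))).2 z)
      ↔ γ = -1 := by
  constructor
  · intro h
    have defect_eq_zero (z : ℂ) (hz : z ≠ 0) (hz1 : z ≠ 1) (hz2 : z ^ 2 ≠ 1) :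
        (1 + γ) * ((z + 1) / (z - 1) * z + (k2 - 1/2) * z) = 0 := by
      have heq := (h id (fun _ => 0) ⟨X, 0, by simp⟩ ⟨0, 0, by simp⟩ z hz hz2).1
      rw [Ehat_Dhat_fst k1 k2 γ differentiableAt_id analyticAt_const hz hz1,
        Eplus_apply_of_hasDerivAt _ _ (hasDerivAt_id z), one_add_inv_div_one_sub_inv_s5 hz, id_eq] at heq
      linear_combination heq
    have h2 := defect_eq_zero 2 (by norm_num) (by norm_num) (by norm_num)
    have h3 := defect_eq_zero 3 (by norm_num) (by norm_num) (by norm_num)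
    linear_combination (3 * h2 - 2 * h3) / 6
  · rintro rfl f g hf hg z hz hz2
    have hz1 : z ≠ 1 := by rintro rfl; norm_num at hz2
    have hz1' : z ≠ -1 := by rintro rfl; norm_num at hz2
    rw [Ehat_Dhat_fst _ _ _ (hf.analyticAt hz).differentiableAt (hg.analyticAt hz) hz hz1,
      Ehat_Dhat_snd _ _ _ (hf.analyticAt hz) (hg.analyticAt hz).differentiableAt hz hz1 hz1']
    constructor <;> ring
end
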